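/- (Rule of Pentagons) Let n ≥ 5 and let A and B be the z-matrix and w-matrix of a singular sequence and C = A + B. Let i_1, i_2, i_3, i_4, i_5 ∈ {1,…,n} be pairwise distinct and set i_0 = i_5. Suppose the product over k = 0,…,4 of c_{i_k i_{k+1}} is nonzero. Define N_z = #{ k ∈ {0,1,2,3,4} : (a_{i_k i_{k+1}}, b_{i_k i_{k+1}}) = (1,0) }, N_w = #{ k : (a_{i_k i_{k+1}}, b_{i_k i_{k+1}}) = (0,1) }, and N_{zw} = #{ k : (a_{i_k i_{k+1}}, b_{i_k i_{k+1}}) = (1,1) }. Then N_z ≠ 1, N_w ≠ 1, and (N_z, N_w, N_{zw}) is neither (4, 0, 1) nor (0, 4, 1). -/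

import Mathlib

open Filter Finset

/-- `Zq δ z k l` is the quantity `Z_{lk} = δ_{kl}^3 · (z_k − z_l)`
(and, applied to `w`, the quantity `W_{lk}`). -/
noncomputable def Zq {n : ℕ} (δ : Fin n → Fin n → ℂ) (z : Fin n → ℂ) (k l : Fin n) : ℂ :=
  δ k l ^ 3 * (z k - z l)

/-- A singular sequence of normalized central configurations for the masses `m`:
sequences `z^{(N)}, w^{(N)} ∈ ℂ^n`, symmetric `δ^{(N)}`, and positive reals `ε_N → 0`
such that every term satisfies the central configuration equations
`z_k = ∑_{l≠k} m_l Z_{lk}`, `w_k = ∑_{l≠k} m_l W_{lk}`, the normalization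
`δ_{kl}^2 z_{kl} w_{kl} = 1` (`k ≠ l`), the maximum of the `|z_k|, |Z_{kl}|`
(resp. `|w_k|, |W_{kl}|`) equals `ε_N^{-2}`, and all the sequences
`ε_N^2 z_k, ε_N^2 w_k, ε_N^2 Z_{kl}, ε_N^2 W_{kl}` converge. -/
structure SingularSeq (n : ℕ) (m : Fin n → ℂ) : Type where
  z : ℕ → Fin n → ℂ
  w : ℕ → Fin n → ℂ
  delta : ℕ → Fin n → Fin n → ℂ
  eps : ℕ → ℝ
  eps_pos : ∀ N, 0 < eps N
  eps_lim : Tendsto eps atTop (nhds 0)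
  delta_symm : ∀ N, ∀ k l : Fin n, delta N k l = delta N l k
  eq_z : ∀ N, ∀ k : Fin n, z N k = ∑ l ∈ univ.erase k, m l * Zq (delta N) (z N) k l
  eq_w : ∀ N, ∀ k : Fin n, w N k = ∑ l ∈ univ.erase k, m l * Zq (delta N) (w N) k l
  normalize : ∀ N, ∀ k l : Fin n, k ≠ l →
    delta N k l ^ 2 * (z N l - z N k) * (w N l - w N k) = 1
  maxZ : ∀ N, IsGreatest
      ({x : ℝ | ∃ k, x = ‖z N k‖} ∪
        {x : ℝ | ∃ k l, k ≠ l ∧ x = ‖Zq (delta N) (z N) k l‖})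
      (eps N ^ (-2 : ℤ))
  maxW : ∀ N, IsGreatest
      ({x : ℝ | ∃ k, x = ‖w N k‖} ∪
        {x : ℝ | ∃ k l, k ≠ l ∧ x = ‖Zq (delta N) (w N) k l‖})
      (eps N ^ (-2 : ℤ))
  conv_z : ∀ k : Fin n, ∃ L : ℂ,
    Tendsto (fun N => (eps N : ℂ) ^ 2 * z N k) atTop (nhds L)
  conv_w : ∀ k : Fin n, ∃ L : ℂ,
    Tendsto (fun N => (eps N : ℂ) ^ 2 * w N k) atTop (nhds L)
  conv_Z : ∀ k l : Fin n, k ≠ l → ∃ L : ℂ,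
    Tendsto (fun N => (eps N : ℂ) ^ 2 * Zq (delta N) (z N) k l) atTop (nhds L)
  conv_W : ∀ k l : Fin n, k ≠ l → ∃ L : ℂ,
    Tendsto (fun N => (eps N : ℂ) ^ 2 * Zq (delta N) (w N) k l) atTop (nhds L)

/-- `A` and `B` are the z-matrix and the w-matrix of the singular sequence `S`:
symmetric `{0,1}`-matrices whose entries record which of the (convergent) sequences
`ε_N^2 z_i`, `ε_N^2 Z_{ij}` (resp. `ε_N^2 w_i`, `ε_N^2 W_{ij}`) have nonzero limit. -/
structure IsZWMatrices {n : ℕ} {m : Fin n → ℂ} (S : SingularSeq n m)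
    (A B : Matrix (Fin n) (Fin n) ℕ) : Prop where
  zeroOne_A : ∀ i j, A i j = 0 ∨ A i j = 1
  symm_A : ∀ i j, A i j = A j i
  zeroOne_B : ∀ i j, B i j = 0 ∨ B i j = 1
  symm_B : ∀ i j, B i j = B j i
  diag_A : ∀ i, A i i = 1 ↔
    ¬ Tendsto (fun N => (S.eps N : ℂ) ^ 2 * S.z N i) atTop (nhds 0)
  off_A : ∀ i j, i ≠ j → (A i j = 1 ↔
    ¬ Tendsto (fun N => (S.eps N : ℂ) ^ 2 * Zq (S.delta N) (S.z N) i j) atTop (nhds 0))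
  diag_B : ∀ i, B i i = 1 ↔
    ¬ Tendsto (fun N => (S.eps N : ℂ) ^ 2 * S.w N i) atTop (nhds 0)
  off_B : ∀ i j, i ≠ j → (B i j = 1 ↔
    ¬ Tendsto (fun N => (S.eps N : ℂ) ^ 2 * Zq (S.delta N) (S.w N) i j) atTop (nhds 0))

/-!
Along an edge `{i, j}` the normalization `δ² z_{ij} w_{ij} = 1` gives `z_{ij}⁴ = Z_{ij} / W_{ij}³`,
hence `(z_{ij}/ε)⁴ = ε² Z_{ij} / (ε² W_{ij})³`. So `z_{ij}/ε` is unbounded on an edge of type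
`(a, b) = (1, 0)`, tends to `0` on an edge of type `(0, 1)`, and has norm tending to a positive
limit on an edge of type `(1, 1)`. The differences `z_{i_k} - z_{i_{k+1}}` sum to zero around the
pentagon, so neither a single unbounded term among bounded ones, nor a single term not tending to
`0` among terms that do, is possible. Exchanging the roles of `z` and `w` gives the rest.
-/

open Topology

section ClosedPolygons

variable {ι γ : Type*} [Fintype ι] {l : Filter γ}

lemma sum_sub_shift_eq_zero {G : Type*} [AddCommGroup G] [AddGroup ι] (f : ι → G) (a : ι) :
    ∑ k, (f k - f (k + a)) = 0 := by
  rw [sum_sub_distrib, sub_eq_zero]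
  exact (Equiv.sum_comp (Equiv.addRight a) f).symm

lemma exists_of_card_filter_eq_one {p : ι → Prop} [DecidablePred p] (h : #{k | p k} = 1) :
    ∃ k₀, p k₀ ∧ ∀ k ≠ k₀, ¬ p k := by
  obtain ⟨k₀, hk₀⟩ := card_eq_one.mp h
  rw [eq_singleton_iff_unique_mem] at hk₀
  exact ⟨k₀, (mem_filter.mp hk₀.1).2, fun k hk hpk => hk (hk₀.2 k (by simpa using hpk))⟩

lemma eq_neg_sum_erase_of_sum_eq_zero [DecidableEq ι] {G : Type*} [AddCommGroup G] {f : ι → G}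
    (h : ∑ k, f k = 0) (k₀ : ι) : f k₀ = -∑ k ∈ univ.erase k₀, f k := by
  rw [sum_erase_eq_sub (mem_univ k₀), h, zero_sub, neg_neg]

lemma tendsto_zero_of_sum_eq_zero [DecidableEq ι] {E : Type*} [AddCommGroup E]
    [TopologicalSpace E] [IsTopologicalAddGroup E] {g : ι → γ → E} (hsum : ∀ x, ∑ k, g k x = 0)
    {k₀ : ι} (h : ∀ k ≠ k₀, Tendsto (g k) l (𝓝 0)) : Tendsto (g k₀) l (𝓝 0) := by
  have hrest : Tendsto (fun x => -∑ k ∈ univ.erase k₀, g k x) l (𝓝 (-∑ k ∈ univ.erase k₀, 0)) :=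
    (tendsto_finsetSum _ fun k hk => h k (ne_of_mem_erase hk)).neg
  rw [sum_const_zero, neg_zero] at hrest
  exact hrest.congr fun x => (eq_neg_sum_erase_of_sum_eq_zero (hsum x) k₀).symm

lemma isBoundedUnder_norm_of_sum_eq_zero [DecidableEq ι] {E : Type*} [SeminormedAddCommGroup E]
    {g : ι → γ → E} (hsum : ∀ x, ∑ k, g k x = 0) {k₀ : ι}
    (h : ∀ k ≠ k₀, IsBoundedUnder (· ≤ ·) l fun x => ‖g k x‖) :
    IsBoundedUnder (· ≤ ·) l fun x => ‖g k₀ x‖ := by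
  refine (isBoundedUnder_le_sum (univ.erase k₀) fun k hk => h k (ne_of_mem_erase hk)).mono_le
    (Eventually.of_forall fun x => ?_)
  calc ‖g k₀ x‖ = ‖∑ k ∈ univ.erase k₀, g k x‖ := by
        rw [eq_neg_sum_erase_of_sum_eq_zero (hsum x) k₀, norm_neg]
    _ ≤ ∑ k ∈ univ.erase k₀, ‖g k x‖ := norm_sum_le _ _
    _ = (∑ k ∈ univ.erase k₀, fun x => ‖g k x‖) x := by rw [Finset.sum_apply]

lemma card_filter_ne_one_of_sum_eq_zero_of_unbounded [DecidableEq ι] [l.NeBot] {E : Type*}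
    [SeminormedAddCommGroup E] {g : ι → γ → E} (hsum : ∀ x, ∑ k, g k x = 0)
    (p : ι → Prop) [DecidablePred p] (hp : ∀ k, p k → Tendsto (fun x => ‖g k x‖) l atTop)
    (hnp : ∀ k, ¬ p k → IsBoundedUnder (· ≤ ·) l fun x => ‖g k x‖) :
    #{k | p k} ≠ 1 := fun h => by
  obtain ⟨k₀, hk₀, hother⟩ := exists_of_card_filter_eq_one h
  exact not_isBoundedUnder_of_tendsto_atTop (hp k₀ hk₀)
    (isBoundedUnder_norm_of_sum_eq_zero hsum fun k hk => hnp k (hother k hk))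

lemma card_filter_ne_one_of_sum_eq_zero_of_not_tendsto_zero [DecidableEq ι] {E : Type*}
    [AddCommGroup E] [TopologicalSpace E] [IsTopologicalAddGroup E] {g : ι → γ → E}
    (hsum : ∀ x, ∑ k, g k x = 0) (p : ι → Prop) [DecidablePred p]
    (hp : ∀ k, p k → ¬ Tendsto (g k) l (𝓝 0)) (hnp : ∀ k, ¬ p k → Tendsto (g k) l (𝓝 0)) :
    #{k | p k} ≠ 1 := fun h => by
  obtain ⟨k₀, hk₀, hother⟩ := exists_of_card_filter_eq_one h
  exact hp k₀ hk₀ (tendsto_zero_of_sum_eq_zero hsum fun k hk => hnp k (hother k hk))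

end ClosedPolygons

section EdgeAsymptotics

lemma cube_mul_ne_zero_of_sq_mul_mul_eq_one {d u w : ℂ} (h : d ^ 2 * u * w = 1) :
    d ^ 3 * w ≠ 0 := by
  intro h0
  obtain rfl : d = 0 := by linear_combination (-d) * h + u * h0
  simp at h

lemma div_pow_four_eq {ε u w d : ℂ} (hε : ε ≠ 0) (h : d ^ 2 * u * w = 1) :
    (u / ε) ^ 4 = ε ^ 2 * (d ^ 3 * u) / (ε ^ 2 * (d ^ 3 * w)) ^ 3 := by
  have hden := mul_ne_zero (pow_ne_zero 2 hε) (cube_mul_ne_zero_of_sq_mul_mul_eq_one h)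
  rw [div_pow, div_eq_div_iff (pow_ne_zero 4 hε) (pow_ne_zero 3 hden)]
  linear_combination (ε ^ 6 * d ^ 3 * u * ((d ^ 2 * u * w) ^ 2 + d ^ 2 * u * w + 1)) * h

lemma norm_div_eq_rpow {ε u w d : ℂ} (hε : ε ≠ 0) (h : d ^ 2 * u * w = 1) :
    ‖u / ε‖ = (‖ε ^ 2 * (d ^ 3 * u)‖ / ‖ε ^ 2 * (d ^ 3 * w)‖ ^ 3) ^ (4⁻¹ : ℝ) := by
  rw [← norm_pow, ← norm_div, ← div_pow_four_eq hε h, norm_pow]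
  exact (Real.pow_rpow_inv_natCast (norm_nonneg _) four_ne_zero).symm

variable {γ : Type*} {l : Filter γ} {ε u w d : γ → ℂ} {α β : ℂ}

lemma tendsto_norm_div_atTop (hε : ∀ x, ε x ≠ 0) (h : ∀ x, d x ^ 2 * u x * w x = 1)
    (hα : Tendsto (fun x => ε x ^ 2 * (d x ^ 3 * u x)) l (𝓝 α)) (hα₀ : α ≠ 0)
    (hβ : Tendsto (fun x => ε x ^ 2 * (d x ^ 3 * w x)) l (𝓝 0)) :
    Tendsto (fun x => ‖u x / ε x‖) l atTop := by
  have hden : Tendsto (fun x => ‖ε x ^ 2 * (d x ^ 3 * w x)‖ ^ 3) l (𝓝[>] 0) :=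
    tendsto_nhdsWithin_of_tendsto_nhds_of_eventually_within _
      (by simpa using hβ.norm.pow 3) (Eventually.of_forall fun x => pow_pos (norm_pos_iff.mpr
        (mul_ne_zero (pow_ne_zero 2 (hε x)) (cube_mul_ne_zero_of_sq_mul_mul_eq_one (h x)))) 3)
  have hratio :=
    Tendsto.pos_mul_atTop (norm_pos_iff.mpr hα₀) hα.norm hden.inv_tendsto_nhdsGT_zero
  exact ((tendsto_rpow_atTop (by norm_num : (0 : ℝ) < 4⁻¹)).comp hratio).congr
    fun x => (norm_div_eq_rpow (hε x) (h x)).symm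

lemma tendsto_norm_div_nhds (hε : ∀ x, ε x ≠ 0) (h : ∀ x, d x ^ 2 * u x * w x = 1)
    (hα : Tendsto (fun x => ε x ^ 2 * (d x ^ 3 * u x)) l (𝓝 α))
    (hβ : Tendsto (fun x => ε x ^ 2 * (d x ^ 3 * w x)) l (𝓝 β)) (hβ₀ : β ≠ 0) :
    Tendsto (fun x => ‖u x / ε x‖) l (𝓝 ((‖α‖ / ‖β‖ ^ 3) ^ (4⁻¹ : ℝ))) :=
  ((hα.norm.div (hβ.norm.pow 3) (by positivity)).rpow_const (Or.inr (by norm_num))).congr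
    fun x => (norm_div_eq_rpow (hε x) (h x)).symm

end EdgeAsymptotics

namespace SingularSeq

variable {n : ℕ} {m : Fin n → ℂ}

def swap (S : SingularSeq n m) : SingularSeq n m where
  z := S.w
  w := S.z
  delta := S.delta
  eps := S.eps
  eps_pos := S.eps_pos
  eps_lim := S.eps_lim
  delta_symm := S.delta_symm
  eq_z := S.eq_w
  eq_w := S.eq_z
  normalize N k l hkl := by rw [mul_right_comm]; exact S.normalize N k l hkl
  maxZ := S.maxW
  maxW := S.maxZ
  conv_z := S.conv_w
  conv_w := S.conv_z
  conv_Z := S.conv_W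
  conv_W := S.conv_Z

lemma eps_ne_zero (S : SingularSeq n m) (N : ℕ) : (S.eps N : ℂ) ≠ 0 :=
  Complex.ofReal_ne_zero.mpr (S.eps_pos N).ne'

lemma normalize_sub (S : SingularSeq n m) (N : ℕ) {i j : Fin n} (hij : i ≠ j) :
    S.delta N i j ^ 2 * (S.z N i - S.z N j) * (S.w N i - S.w N j) = 1 := by
  linear_combination S.normalize N i j hij

end SingularSeq

namespace IsZWMatrices

variable {n : ℕ} {m : Fin n → ℂ} {S : SingularSeq n m} {A B : Matrix (Fin n) (Fin n) ℕ}
  {i j : Fin n}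

lemma swap (hAB : IsZWMatrices S A B) : IsZWMatrices S.swap B A where
  zeroOne_A := hAB.zeroOne_B
  symm_A := hAB.symm_B
  zeroOne_B := hAB.zeroOne_A
  symm_B := hAB.symm_A
  diag_A := hAB.diag_B
  off_A := hAB.off_B
  diag_B := hAB.diag_A
  off_B := hAB.off_A

lemma entry_cases (hAB : IsZWMatrices S A B) (hC : A i j + B i j ≠ 0) :
    (A i j = 1 ∧ B i j = 0) ∨ (A i j = 0 ∧ B i j = 1) ∨ (A i j = 1 ∧ B i j = 1) := by
  rcases hAB.zeroOne_A i j with hA | hA <;> rcases hAB.zeroOne_B i j with hB | hB <;> simp_all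

lemma exists_tendsto_Z (hAB : IsZWMatrices S A B) (hij : i ≠ j) :
    ∃ α : ℂ, Tendsto (fun N => (S.eps N : ℂ) ^ 2 * (S.delta N i j ^ 3 * (S.z N i - S.z N j)))
      atTop (𝓝 α) ∧ (A i j = 1 ↔ α ≠ 0) := by
  obtain ⟨α, hα⟩ := S.conv_Z i j hij
  exact ⟨α, hα, (hAB.off_A i j hij).trans
    ⟨fun h hα₀ => h (hα₀ ▸ hα), fun hα₀ h => hα₀ (tendsto_nhds_unique hα h)⟩⟩

lemma tendsto_norm_sub_div_atTop (hAB : IsZWMatrices S A B) (hij : i ≠ j) (hA : A i j = 1)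
    (hB : B i j = 0) : Tendsto (fun N => ‖(S.z N i - S.z N j) / S.eps N‖) atTop atTop := by
  obtain ⟨α, hα, hAα⟩ := hAB.exists_tendsto_Z hij
  obtain ⟨β, hβ, hBβ⟩ := hAB.swap.exists_tendsto_Z hij
  obtain rfl : β = 0 := by simpa [hB] using hBβ
  exact tendsto_norm_div_atTop S.eps_ne_zero (S.normalize_sub · hij) hα (hAα.mp hA) hβ

lemma tendsto_sub_div_zero (hAB : IsZWMatrices S A B) (hij : i ≠ j) (hA : A i j = 0)
    (hB : B i j = 1) : Tendsto (fun N => (S.z N i - S.z N j) / S.eps N) atTop (𝓝 0) := by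
  obtain ⟨α, hα, hAα⟩ := hAB.exists_tendsto_Z hij
  obtain ⟨β, hβ, hBβ⟩ := hAB.swap.exists_tendsto_Z hij
  obtain rfl : α = 0 := by simpa [hA] using hAα
  have := tendsto_norm_div_nhds S.eps_ne_zero (S.normalize_sub · hij) hα hβ (hBβ.mp hB)
  rw [norm_zero, zero_div, Real.zero_rpow (by norm_num)] at this
  exact tendsto_zero_iff_norm_tendsto_zero.mpr this

lemma exists_tendsto_norm_sub_div_pos (hAB : IsZWMatrices S A B) (hij : i ≠ j) (hA : A i j = 1)
    (hB : B i j = 1) :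
    ∃ c > 0, Tendsto (fun N => ‖(S.z N i - S.z N j) / S.eps N‖) atTop (𝓝 c) := by
  obtain ⟨α, hα, hAα⟩ := hAB.exists_tendsto_Z hij
  obtain ⟨β, hβ, hBβ⟩ := hAB.swap.exists_tendsto_Z hij
  have hβ₀ := hBβ.mp hB
  refine ⟨_, ?_, tendsto_norm_div_nhds S.eps_ne_zero (S.normalize_sub · hij) hα hβ hβ₀⟩
  have := norm_pos_iff.mpr (hAα.mp hA)
  have := norm_pos_iff.mpr hβ₀
  positivity

lemma card_filter_ne_one_of_closed_polygon {ι : Type*} [Fintype ι] [DecidableEq ι] [AddGroup ι]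
    (hAB : IsZWMatrices S A B) (v : ι → Fin n) (a : ι) (hv : ∀ k, v k ≠ v (k + a))
    (hC : ∀ k, A (v k) (v (k + a)) + B (v k) (v (k + a)) ≠ 0) :
    #{k | A (v k) (v (k + a)) = 1 ∧ B (v k) (v (k + a)) = 0} ≠ 1 ∧
      (#{k | A (v k) (v (k + a)) = 1 ∧ B (v k) (v (k + a)) = 0} = 0 →
        #{k | A (v k) (v (k + a)) = 1 ∧ B (v k) (v (k + a)) = 1} ≠ 1) := by
  set g : ι → ℕ → ℂ := fun k N => (S.z N (v k) - S.z N (v (k + a))) / S.eps N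
  have hsum : ∀ N, ∑ k, g k N = 0 := fun N => by
    simp only [g, ← sum_div, sum_sub_shift_eq_zero (fun k => S.z N (v k)), zero_div]
  have hbounded : ∀ k, ¬ (A (v k) (v (k + a)) = 1 ∧ B (v k) (v (k + a)) = 0) →
      IsBoundedUnder (· ≤ ·) atTop fun N => ‖g k N‖ := fun k hk => by
    rcases hAB.entry_cases (hC k) with h | ⟨hA, hB⟩ | ⟨hA, hB⟩
    · exact absurd h hk
    · exact (hAB.tendsto_sub_div_zero (hv k) hA hB).norm.isBoundedUnder_le
    · obtain ⟨c, -, hc⟩ := hAB.exists_tendsto_norm_sub_div_pos (hv k) hA hB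
      exact hc.isBoundedUnder_le
  refine ⟨card_filter_ne_one_of_sum_eq_zero_of_unbounded hsum _
    (fun k hk => hAB.tendsto_norm_sub_div_atTop (hv k) hk.1 hk.2) hbounded, fun h₀ => ?_⟩
  rw [card_eq_zero, filter_eq_empty_iff] at h₀
  refine card_filter_ne_one_of_sum_eq_zero_of_not_tendsto_zero (l := atTop) hsum _
    (fun k hk h => ?_) fun k hk => ?_
  · obtain ⟨c, hc₀, hc⟩ := hAB.exists_tendsto_norm_sub_div_pos (hv k) hk.1 hk.2
    exact hc₀.ne' (tendsto_nhds_unique hc (by simpa only [norm_zero] using h.norm))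
  · rcases hAB.entry_cases (hC k) with h | ⟨hA, hB⟩ | h
    · exact absurd h (h₀ (mem_univ k))
    · exact hAB.tendsto_sub_div_zero (hv k) hA hB
    · exact absurd h hk

end IsZWMatrices

theorem rule_of_pentagons_general (n : ℕ) (m : Fin n → ℂ)
    (S : SingularSeq n m) (A B : Matrix (Fin n) (Fin n) ℕ)
    (hAB : IsZWMatrices S A B) :
    ∀ v : Fin 5 → Fin n, Function.Injective v →
      (∀ k : Fin 5, A (v k) (v (k + 1)) + B (v k) (v (k + 1)) ≠ 0) →
      (univ.filter fun k : Fin 5 =>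
          A (v k) (v (k + 1)) = 1 ∧ B (v k) (v (k + 1)) = 0).card ≠ 1 ∧
      (univ.filter fun k : Fin 5 =>
          A (v k) (v (k + 1)) = 0 ∧ B (v k) (v (k + 1)) = 1).card ≠ 1 ∧
      ¬ ((univ.filter fun k : Fin 5 =>
            A (v k) (v (k + 1)) = 1 ∧ B (v k) (v (k + 1)) = 0).card = 4 ∧
          (univ.filter fun k : Fin 5 =>
            A (v k) (v (k + 1)) = 0 ∧ B (v k) (v (k + 1)) = 1).card = 0 ∧
          (univ.filter fun k : Fin 5 =>
            A (v k) (v (k + 1)) = 1 ∧ B (v k) (v (k + 1)) = 1).card = 1) ∧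
      ¬ ((univ.filter fun k : Fin 5 =>
            A (v k) (v (k + 1)) = 1 ∧ B (v k) (v (k + 1)) = 0).card = 0 ∧
          (univ.filter fun k : Fin 5 =>
            A (v k) (v (k + 1)) = 0 ∧ B (v k) (v (k + 1)) = 1).card = 4 ∧
          (univ.filter fun k : Fin 5 =>
            A (v k) (v (k + 1)) = 1 ∧ B (v k) (v (k + 1)) = 1).card = 1) := by
  intro v hv hC
  have hstep : ∀ k : Fin 5, v k ≠ v (k + 1) := fun k => hv.ne (by simp)
  obtain ⟨hz, hz'⟩ := hAB.card_filter_ne_one_of_closed_polygon v 1 hstep hC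
  obtain ⟨hw, hw'⟩ := hAB.swap.card_filter_ne_one_of_closed_polygon v 1 hstep
    fun k => by rw [add_comm]; exact hC k
  simp only [and_comm (a := B _ _ = 1)] at hw hw'
  exact ⟨hz, hw, fun h => hw' h.2.1 h.2.2, fun h => hz' h.1 h.2.2⟩

theorem rule_of_pentagons (n : ℕ) (hn : 5 ≤ n) (m : Fin n → ℂ)
    (hm : ∀ I : Finset (Fin n), I.Nonempty → ∑ k ∈ I, m k ≠ 0)
    (S : SingularSeq n m) (A B : Matrix (Fin n) (Fin n) ℕ)
    (hAB : IsZWMatrices S A B) :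
    ∀ v : Fin 5 → Fin n, Function.Injective v →
      (∀ k : Fin 5, A (v k) (v (k + 1)) + B (v k) (v (k + 1)) ≠ 0) →
      (univ.filter fun k : Fin 5 =>
          A (v k) (v (k + 1)) = 1 ∧ B (v k) (v (k + 1)) = 0).card ≠ 1 ∧
      (univ.filter fun k : Fin 5 =>
          A (v k) (v (k + 1)) = 0 ∧ B (v k) (v (k + 1)) = 1).card ≠ 1 ∧
      ¬ ((univ.filter fun k : Fin 5 =>
            A (v k) (v (k + 1)) = 1 ∧ B (v k) (v (k + 1)) = 0).card = 4 ∧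
          (univ.filter fun k : Fin 5 =>
            A (v k) (v (k + 1)) = 0 ∧ B (v k) (v (k + 1)) = 1).card = 0 ∧
          (univ.filter fun k : Fin 5 =>
            A (v k) (v (k + 1)) = 1 ∧ B (v k) (v (k + 1)) = 1).card = 1) ∧
      ¬ ((univ.filter fun k : Fin 5 =>
            A (v k) (v (k + 1)) = 1 ∧ B (v k) (v (k + 1)) = 0).card = 0 ∧
          (univ.filter fun k : Fin 5 =>
            A (v k) (v (k + 1)) = 0 ∧ B (v k) (v (k + 1)) = 1).card = 4 ∧
          (univ.filter fun k : Fin 5 =>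
            A (v k) (v (k + 1)) = 1 ∧ B (v k) (v (k + 1)) = 1).card = 1) :=
  rule_of_pentagons_general n m S A B hAB
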